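/- Let σ > 0 and let G be a real Gaussian random variable with mean −σ²/2 and variance σ². Then E[min(1, e^G)] = 2 Φ(−σ/2), where Φ denotes the cumulative distribution function of the standard normal distribution. -/

import Mathlib

/-!
Split the expectation at `0`. On `{G ≤ 0}` the integrand is `e^G`, and tilting `N(m, v)` by `e^x`
gives `e^{m + v/2} N(m + v, v)`; on `{G > 0}` it is `1`, and `P(G > 0) = P(-G ≤ 0)` with
`-G ~ N(-m, v)`. For `m = -v/2`, `v = σ²` both pieces equal `P(N(v/2, v) ≤ 0) = Φ(-σ/2)`.
-/

open MeasureTheory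

noncomputable def stdNormalCDF (t : ℝ) : ℝ :=
  (Real.sqrt (2 * Real.pi))⁻¹ * ∫ u in Set.Iic t, Real.exp (-u ^ 2 / 2)

open Real Set ProbabilityTheory
open scoped NNReal

namespace ProbabilityTheory

variable {m : ℝ} {v : ℝ≥0}

lemma measureReal_gaussianReal (hv : v ≠ 0) (s : Set ℝ) :
    (gaussianReal m v).real s = ∫ x in s, gaussianPDFReal m v x := by
  rw [measureReal_def, gaussianReal_apply_eq_integral _ hv,
    ENNReal.toReal_ofReal (setIntegral_nonneg_of_ae (ae_of_all _ fun _ ↦ gaussianPDFReal_nonneg _ _ _))]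

lemma setIntegral_gaussianReal (hv : v ≠ 0) (f : ℝ → ℝ) {s : Set ℝ} (hs : MeasurableSet s) :
    ∫ x in s, f x ∂gaussianReal m v = ∫ x in s, gaussianPDFReal m v x * f x := by
  rw [← integral_indicator hs, integral_gaussianReal_eq_integral_smul hv, ← integral_indicator hs]
  congr 1 with x
  by_cases hx : x ∈ s <;> simp [hx]

lemma gaussianPDFReal_mul_exp (m : ℝ) (v : ℝ≥0) (x : ℝ) :
    gaussianPDFReal m v x * exp x = exp (m + v / 2) * gaussianPDFReal (m + v) v x := by
  rcases eq_or_ne v 0 with rfl | hv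
  · simp
  simp only [gaussianPDFReal]
  rw [mul_assoc, ← exp_add, mul_left_comm, ← exp_add]
  congr 2
  field_simp
  ring

lemma setIntegral_exp_gaussianReal (hv : v ≠ 0) {s : Set ℝ} (hs : MeasurableSet s) :
    ∫ x in s, exp x ∂gaussianReal m v = exp (m + v / 2) * (gaussianReal (m + v) v).real s := by
  simp_rw [setIntegral_gaussianReal hv _ hs, measureReal_gaussianReal hv, gaussianPDFReal_mul_exp,
    integral_const_mul]

lemma stdNormalCDF_eq_measureReal (t : ℝ) : stdNormalCDF t = (gaussianReal 0 1).real (Iic t) := by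
  rw [measureReal_gaussianReal one_ne_zero, stdNormalCDF, ← integral_const_mul]
  simp [gaussianPDFReal]

lemma gaussianReal_map_standardize (hv : v ≠ 0) :
    (gaussianReal m v).map (fun x ↦ (x - m) / √v) = gaussianReal 0 1 := by
  have hsq : √(v : ℝ) ^ 2 = v := sq_sqrt v.coe_nonneg
  rw [← Function.comp_def (· / √v) (· - m),
    ← Measure.map_map (measurable_div_const _) (measurable_sub_const _),
    gaussianReal_map_sub_const, gaussianReal_map_div_const, sub_self, zero_div]
  congr 1
  ext
  simp [hsq, hv]

lemma measureReal_gaussianReal_Iic (hv : v ≠ 0) (a : ℝ) :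
    (gaussianReal m v).real (Iic a) = stdNormalCDF ((a - m) / √v) := by
  have hs : 0 < √(v : ℝ) := sqrt_pos.2 (by positivity)
  have hpre : (fun x ↦ (x - m) / √v) ⁻¹' Iic ((a - m) / √v) = Iic a := by
    ext x; simp [div_le_div_iff_of_pos_right hs]
  rw [stdNormalCDF_eq_measureReal, ← gaussianReal_map_standardize hv,
    map_measureReal_apply ((measurable_sub_const m).div_const _) measurableSet_Iic, hpre]

lemma measureReal_gaussianReal_Ioi (hv : v ≠ 0) (a : ℝ) :
    (gaussianReal m v).real (Ioi a) = (gaussianReal (-m) v).real (Iic (-a)) := by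
  have := nullSingletonClass_gaussianReal (μ := -m) hv
  have hpre : Neg.neg ⁻¹' Iio (-a) = Ioi a := by simp
  rw [← measureReal_congr Iio_ae_eq_Iic, ← gaussianReal_map_neg,
    map_measureReal_apply measurable_neg measurableSet_Iio, hpre]

theorem integral_min_one_exp_gaussianReal (hv : v ≠ 0) :
    ∫ x, min 1 (exp x) ∂gaussianReal m v =
      exp (m + v / 2) * stdNormalCDF (-(m + v) / √v) + stdNormalCDF (m / √v) := by
  have hint : Integrable (fun x ↦ min 1 (exp x)) (gaussianReal m v) := by
    refine .of_bound (by fun_prop) 1 (ae_of_all _ fun x ↦ ?_)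
    rw [norm_of_nonneg (le_min zero_le_one (exp_nonneg x))]
    exact min_le_left _ _
  have hlow : ∫ x in Iic 0, min 1 (exp x) ∂gaussianReal m v =
      exp (m + v / 2) * stdNormalCDF (-(m + v) / √v) := by
    rw [setIntegral_congr_fun measurableSet_Iic fun x hx ↦ min_eq_right (exp_le_one_iff.2 hx),
      setIntegral_exp_gaussianReal hv measurableSet_Iic, measureReal_gaussianReal_Iic hv, zero_sub]
  have hupp : ∫ x in Ioi 0, min 1 (exp x) ∂gaussianReal m v = stdNormalCDF (m / √v) := by
    rw [setIntegral_congr_fun measurableSet_Ioi fun x hx ↦ min_eq_left (one_le_exp hx.le),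
      setIntegral_const, smul_eq_mul, mul_one, measureReal_gaussianReal_Ioi hv,
      measureReal_gaussianReal_Iic hv, neg_zero, zero_sub, neg_neg]
  rw [← integral_add_compl measurableSet_Iic hint, compl_Iic, hlow, hupp]

end ProbabilityTheory

theorem stmt_6 (σ : ℝ) (hσ : 0 < σ) :
    ∫ g, min 1 (Real.exp g)
        ∂(ProbabilityTheory.gaussianReal (-σ ^ 2 / 2) (Real.toNNReal (σ ^ 2))) =
      2 * stdNormalCDF (-σ / 2) := by
  have hv : (σ ^ 2).toNNReal ≠ 0 := by simp [hσ.ne']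
  have hsqrt : √((σ ^ 2).toNNReal : ℝ) = σ := by
    rw [Real.coe_toNNReal _ (sq_nonneg σ), sqrt_sq hσ.le]
  rw [integral_min_one_exp_gaussianReal hv, hsqrt, Real.coe_toNNReal _ (sq_nonneg σ)]
  have hneg : -(-σ ^ 2 / 2 + σ ^ 2) / σ = -σ / 2 := by field_simp; ring
  have hpos : -σ ^ 2 / 2 / σ = -σ / 2 := by field_simp
  rw [hneg, hpos, show -σ ^ 2 / 2 + σ ^ 2 / 2 = 0 by ring, exp_zero]
  ring
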